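/- Let α, β be two positive real affine roots such that ℓ(s_α s_β) = ℓ(s_α) + ℓ(s_β). Then ⟨α, β∨⟩ ≤ 0. -/
import Mathlib


/-- Elements of the affine root lattice (resp. affine coroot lattice) of the affine
(untwisted) Kac–Moody root system, written in coordinates with respect to the simple
roots `α_0, …, α_n` (resp. the simple coroots `α_0∨, …, α_n∨`).  The dominance
(partial) order `a ≤ b` (meaning `b - a` is a nonnegative combination of the simple
roots/coroots) is the coordinatewise order. -/
abbrev AffLat (n : ℕ) := Fin (n + 1) → ℤ

/-- The `i`-th simple root (resp. simple coroot) as a coordinate vector. -/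
def simpleVec {n : ℕ} (i : Fin (n + 1)) : AffLat n := Pi.single i 1

/-- The height of a root (resp. coroot): the sum of its coordinates in the basis of
simple roots (resp. simple coroots). -/
def htv {n : ℕ} (a : AffLat n) : ℤ := ∑ j, a j

/-- `a` is a simple root (a standard basis vector). -/
def IsSimpleVec {n : ℕ} (a : AffLat n) : Prop := ∃ i, a = simpleVec i

/-- Axiomatization of the affine (untwisted) Kac–Moody root system attached to a
finite simple Lie algebra, together with its affine Weyl group `W` (a Coxeter group
with simple reflections `s_0, …, s_n`), its action on the root and coroot lattices,
the coroot map `α ↦ α∨` on real roots, the reflection map `α ↦ s_α`, and the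
imaginary coroot `c = α_0∨ + θ∨`. -/
structure AffineRootSystem (n : ℕ) (W : Type*) [Group W] where
  /-- the affine Cartan matrix: `cartan i j = ⟨α_j, α_i∨⟩` -/
  cartan : Fin (n + 1) → Fin (n + 1) → ℤ
  cartan_diag : ∀ i, cartan i i = 2
  cartan_offdiag : ∀ i j, i ≠ j → cartan i j ≤ 0
  cartan_symm_zero : ∀ i j, cartan i j = 0 → cartan j i = 0
  /-- the Coxeter matrix of the affine Weyl group -/
  M : CoxeterMatrix (Fin (n + 1))
  /-- the affine Weyl group, as a Coxeter system with simple reflections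
  `cs.simple 0, …, cs.simple n` and Coxeter length `cs.length` -/
  cs : CoxeterSystem M W
  /-- the action of the affine Weyl group on the root lattice -/
  actR : W → AffLat n → AffLat n
  actR_one : ∀ a, actR 1 a = a
  actR_mul : ∀ u v a, actR (u * v) a = actR u (actR v a)
  actR_add : ∀ w a b, actR w (a + b) = actR w a + actR w b
  actR_simple : ∀ i a, actR (cs.simple i) a = a - (∑ k, cartan i k * a k) • simpleVec i
  /-- the action of the affine Weyl group on the coroot lattice -/
  actC : W → AffLat n → AffLat n
  actC_one : ∀ b, actC 1 b = b
  actC_mul : ∀ u v b, actC (u * v) b = actC u (actC v b)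
  actC_add : ∀ w a b, actC w (a + b) = actC w a + actC w b
  actC_simple : ∀ i b, actC (cs.simple i) b = b - (∑ k, cartan k i * b k) • simpleVec i
  /-- the coroot `α∨` of a real root `α` -/
  coroot : AffLat n → AffLat n
  coroot_simple : ∀ i, coroot (simpleVec i) = simpleVec i
  coroot_act : ∀ w a, coroot (actR w a) = actC w (coroot a)
  /-- the reflection `s_α ∈ W` of a real root `α` -/
  refl : AffLat n → W
  refl_simple : ∀ i, refl (simpleVec i) = cs.simple i
  refl_act : ∀ w a, refl (actR w a) = w * refl a * w⁻¹
  /-- the coordinates of the imaginary coroot `c = α_0∨ + θ∨` in the basis of simple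
  coroots; thus `imag 0 = 1` and `imag i = m_i` for `i ≥ 1`, where
  `θ∨ = m_1 α_1∨ + ⋯ + m_n α_n∨` -/
  imag : AffLat n
  imag_zero : imag 0 = 1
  imag_pos : ∀ i, 1 ≤ imag i
  imag_invariant : ∀ w, actC w imag = imag
  /-- the standard relation between lengths and positivity of roots:
  `ℓ(w s_α) < ℓ(w)` iff `w(α) < 0` -/
  length_refl_lt_iff : ∀ a : AffLat n, (∃ w i, a = actR w (simpleVec i)) → 0 ≤ a →
    ∀ w : W, cs.length (w * refl a) < cs.length w ↔ actR w a ≤ 0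

namespace AffineRootSystem

variable {n : ℕ} {W : Type*} [Group W] (R : AffineRootSystem n W)

/-- `α` is a positive real root of the affine root system. -/
def IsPosRoot (a : AffLat n) : Prop := (∃ w i, a = R.actR w (simpleVec i)) ∧ 0 ≤ a

/-- The evaluation pairing `⟨α, β∨⟩` of a root `α` (coordinates w.r.t. the simple
roots) against a coroot `β∨` (coordinates w.r.t. the simple coroots), computed via
the affine Cartan matrix `cartan i k = ⟨α_k, α_i∨⟩`. -/
def pairing (a b : AffLat n) : ℤ := ∑ i, ∑ k, b i * (R.cartan i k * a k)

/-- `α` belongs to the set `Π̃` of positive real roots with `ℓ(s_α) = 2 ht(α∨) - 1`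
(the roots appearing in the affine quantum Chevalley formula). -/
def IsChevalleyRoot (a : AffLat n) : Prop :=
  R.IsPosRoot a ∧ (R.cs.length (R.refl a) : ℤ) = 2 * htv (R.coroot a) - 1

end AffineRootSystem

/- ====================  DEVELOPMENT  ==================== -/

private def bfseq (p q : ℤ) : ℕ → ℤ × ℤ
  | 0 => (1, 0)
  | (m+1) => ((1 - p * q) * (bfseq p q m).1 - q * (bfseq p q m).2,
              p * (bfseq p q m).1 + (bfseq p q m).2)

private lemma bfseq_nonneg {p q : ℤ} (hp : 1 ≤ p) (hq : q ≤ -1) :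
    ∀ m : ℕ, 1 ≤ (bfseq p q m).1 ∧ 0 ≤ (bfseq p q m).2 := by
  intro m
  induction m with
  | zero => exact ⟨le_refl 1, le_refl 0⟩
  | succ m ih =>
    obtain ⟨h1, h2⟩ := ih
    have hpq : p * q ≤ -1 := by nlinarith
    constructor
    · simp only [bfseq]
      nlinarith
    · simp only [bfseq]
      nlinarith

private lemma bfseq_snd_pos {p q : ℤ} (hp : 1 ≤ p) (hq : q ≤ -1) (m : ℕ) (hm : m ≠ 0) :
    1 ≤ (bfseq p q m).2 := by
  cases m with
  | zero => exact absurd rfl hm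
  | succ m =>
    obtain ⟨h1, h2⟩ := bfseq_nonneg hp hq m
    simp only [bfseq]
    nlinarith

namespace AffineRootSystem

variable {n : ℕ} {W : Type*} [Group W] (R : AffineRootSystem n W)

/-! ### Linearity facts for the actions -/

lemma actR_zero (w : W) : R.actR w 0 = 0 := by
  have h := R.actR_add w 0 0
  rw [add_zero] at h
  exact (left_eq_add.mp h)

lemma actR_zsmul (w : W) (m : ℤ) (a : AffLat n) :
    R.actR w (m • a) = m • R.actR w a :=
  map_zsmul (AddMonoidHom.mk' (R.actR w) (R.actR_add w)) m a

lemma actR_neg (w : W) (a : AffLat n) : R.actR w (-a) = -R.actR w a :=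
  map_neg (AddMonoidHom.mk' (R.actR w) (R.actR_add w)) a

lemma actR_sub (w : W) (a b : AffLat n) :
    R.actR w (a - b) = R.actR w a - R.actR w b :=
  map_sub (AddMonoidHom.mk' (R.actR w) (R.actR_add w)) a b

lemma actR_actR_inv (w : W) (x : AffLat n) : R.actR w (R.actR w⁻¹ x) = x := by
  rw [← R.actR_mul, mul_inv_cancel, R.actR_one]

lemma actR_inv_actR (w : W) (x : AffLat n) : R.actR w⁻¹ (R.actR w x) = x := by
  rw [← R.actR_mul, inv_mul_cancel, R.actR_one]

lemma actR_injective (w : W) : Function.Injective (R.actR w) := by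
  intro x y h
  have h2 := congrArg (R.actR w⁻¹) h
  rwa [R.actR_inv_actR, R.actR_inv_actR] at h2

/-! ### simpleVec facts -/

lemma simpleVec_nonneg (i : Fin (n + 1)) : (0 : AffLat n) ≤ simpleVec i := by
  rw [Pi.le_def]
  intro j
  simp only [Pi.zero_apply, simpleVec, Pi.single_apply]
  split <;> norm_num

lemma simpleVec_ne_zero (i : Fin (n + 1)) : simpleVec (n := n) i ≠ 0 := by
  intro h
  have := congrFun h i
  simp [simpleVec] at this

lemma sum_mul_single (i : Fin (n + 1)) (f : Fin (n + 1) → ℤ) :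
    (∑ k, f k * simpleVec i k) = f i := by
  simp [simpleVec, Pi.single_apply, mul_ite]

lemma sum_single_mul (i : Fin (n + 1)) (f : Fin (n + 1) → ℤ) :
    (∑ k, simpleVec i k * f k) = f i := by
  simp [simpleVec, Pi.single_apply, ite_mul]

/-! ### pairing: bilinearity -/

lemma pairing_sub_left (a b c : AffLat n) :
    R.pairing (a - b) c = R.pairing a c - R.pairing b c := by
  unfold pairing
  rw [← Finset.sum_sub_distrib]
  refine Finset.sum_congr rfl fun i _ => ?_
  rw [← Finset.sum_sub_distrib]
  refine Finset.sum_congr rfl fun k _ => ?_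
  simp only [Pi.sub_apply]
  ring

lemma pairing_sub_right (a b c : AffLat n) :
    R.pairing a (b - c) = R.pairing a b - R.pairing a c := by
  unfold pairing
  rw [← Finset.sum_sub_distrib]
  refine Finset.sum_congr rfl fun i _ => ?_
  rw [← Finset.sum_sub_distrib]
  refine Finset.sum_congr rfl fun k _ => ?_
  simp only [Pi.sub_apply]
  ring

lemma pairing_smul_left (m : ℤ) (a c : AffLat n) :
    R.pairing (m • a) c = m * R.pairing a c := by
  unfold pairing
  rw [Finset.mul_sum]
  refine Finset.sum_congr rfl fun i _ => ?_
  rw [Finset.mul_sum]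
  refine Finset.sum_congr rfl fun k _ => ?_
  simp only [Pi.smul_apply, smul_eq_mul]
  ring

lemma pairing_smul_right (m : ℤ) (a c : AffLat n) :
    R.pairing a (m • c) = m * R.pairing a c := by
  unfold pairing
  rw [Finset.mul_sum]
  refine Finset.sum_congr rfl fun i _ => ?_
  rw [Finset.mul_sum]
  refine Finset.sum_congr rfl fun k _ => ?_
  simp only [Pi.smul_apply, smul_eq_mul]
  ring

lemma pairing_single_right (x : AffLat n) (i : Fin (n + 1)) :
    R.pairing x (simpleVec i) = ∑ k, R.cartan i k * x k := by
  unfold pairing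
  have h : ∀ j, (∑ k, simpleVec i j * (R.cartan j k * x k))
      = simpleVec i j * (∑ k, R.cartan j k * x k) :=
    fun j => (Finset.mul_sum _ _ _).symm
  rw [Finset.sum_congr rfl fun j _ => h j]
  exact sum_single_mul i _

lemma pairing_single_left (y : AffLat n) (i : Fin (n + 1)) :
    R.pairing (simpleVec i) y = ∑ k, R.cartan k i * y k := by
  unfold pairing
  refine Finset.sum_congr rfl fun j _ => ?_
  have h : (∑ k, y j * (R.cartan j k * simpleVec i k))
      = y j * (∑ k, R.cartan j k * simpleVec i k) := (Finset.mul_sum _ _ _).symm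
  rw [h, sum_mul_single i (R.cartan j)]
  ring

lemma pairing_single_single (i : Fin (n + 1)) :
    R.pairing (simpleVec i) (simpleVec i) = 2 := by
  rw [R.pairing_single_right, sum_mul_single i (R.cartan i), R.cartan_diag]

/-! ### pairing: W-invariance -/

lemma pairing_act (w : W) (x y : AffLat n) :
    R.pairing (R.actR w x) (R.actC w y) = R.pairing x y := by
  have key : ∀ (i : Fin (n + 1)) (x y : AffLat n),
      R.pairing (R.actR (R.cs.simple i) x) (R.actC (R.cs.simple i) y) = R.pairing x y := by
    intro i x y
    rw [R.actR_simple, R.actC_simple,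
        show (∑ k, R.cartan i k * x k) = R.pairing x (simpleVec i) from
          (R.pairing_single_right x i).symm,
        show (∑ k, R.cartan k i * y k) = R.pairing (simpleVec i) y from
          (R.pairing_single_left y i).symm]
    simp only [R.pairing_sub_left, R.pairing_sub_right, R.pairing_smul_left,
      R.pairing_smul_right, R.pairing_single_single]
    ring
  refine R.cs.simple_induction_left (p := fun w => ∀ x y : AffLat n,
      R.pairing (R.actR w x) (R.actC w y) = R.pairing x y) w
    (fun x y => by rw [R.actR_one, R.actC_one]) (fun w' i ih x y => ?_) x y
  rw [R.actR_mul, R.actC_mul, key, ih]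

/-! ### coroot and reflection facts -/

lemma coroot_real (w : W) (i : Fin (n + 1)) :
    R.coroot (R.actR w (simpleVec i)) = R.actC w (simpleVec i) := by
  rw [R.coroot_act, R.coroot_simple]

lemma pairing_coroot_self (w : W) (i : Fin (n + 1)) :
    R.pairing (R.actR w (simpleVec i)) (R.coroot (R.actR w (simpleVec i))) = 2 := by
  rw [R.coroot_real, R.pairing_act, R.pairing_single_single]

lemma refl_real (w : W) (i : Fin (n + 1)) :
    R.refl (R.actR w (simpleVec i)) = w * R.cs.simple i * w⁻¹ := by
  rw [R.refl_act, R.refl_simple]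

lemma refl_mul_self (w : W) (i : Fin (n + 1)) :
    R.refl (R.actR w (simpleVec i)) * R.refl (R.actR w (simpleVec i)) = 1 := by
  rw [R.refl_real]
  have h : (w * R.cs.simple i * w⁻¹) * (w * R.cs.simple i * w⁻¹)
      = w * (R.cs.simple i * R.cs.simple i) * w⁻¹ := by group
  rw [h, R.cs.simple_mul_simple_self, mul_one, mul_inv_cancel]

/-- the reflection formula -/
lemma actR_refl (w : W) (i : Fin (n + 1)) (x : AffLat n) :
    R.actR (R.refl (R.actR w (simpleVec i))) x
      = x - (R.pairing x (R.coroot (R.actR w (simpleVec i)))) • R.actR w (simpleVec i) := by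
  rw [R.refl_real, R.actR_mul, R.actR_mul, R.actR_simple]
  have hc : (∑ k, R.cartan i k * (R.actR w⁻¹ x) k)
      = R.pairing x (R.coroot (R.actR w (simpleVec i))) := by
    rw [← R.pairing_single_right, R.coroot_real,
      ← R.pairing_act w (R.actR w⁻¹ x) (simpleVec i), R.actR_actR_inv]
  rw [hc, R.actR_sub, R.actR_zsmul, R.actR_actR_inv]

lemma actR_refl_self (w : W) (i : Fin (n + 1)) :
    R.actR (R.refl (R.actR w (simpleVec i))) (R.actR w (simpleVec i))
      = -(R.actR w (simpleVec i)) := by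
  rw [R.actR_refl, R.pairing_coroot_self]
  module

lemma actR_simple_self (i : Fin (n + 1)) :
    R.actR (R.cs.simple i) (simpleVec i) = -(simpleVec i) := by
  rw [R.actR_simple, sum_mul_single i (R.cartan i), R.cartan_diag]
  module

/-! ### dichotomy: a real root is ≥ 0 or ≤ 0 -/

lemma neg_or_nonneg (u : W) (i : Fin (n + 1)) :
    R.actR u (simpleVec i) ≤ 0 ∨ 0 ≤ R.actR u (simpleVec i) := by
  have hroot : ∃ w j, simpleVec (n := n) i = R.actR w (simpleVec j) :=
    ⟨1, i, (R.actR_one _).symm⟩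
  have hax := R.length_refl_lt_iff (simpleVec i) hroot (simpleVec_nonneg i)
  rcases R.cs.length_mul_simple u i with h | h
  · right
    have h2 := hax (u * R.cs.simple i)
    rw [R.refl_simple] at h2
    have h3 : R.cs.length (u * R.cs.simple i * R.cs.simple i)
        < R.cs.length (u * R.cs.simple i) := by
      rw [R.cs.simple_mul_simple_cancel_right]
      omega
    have h4 := h2.mp h3
    rw [R.actR_mul, R.actR_simple_self, R.actR_neg] at h4
    exact neg_nonpos.mp h4
  · left
    have h2 := hax u
    rw [R.refl_simple] at h2
    exact h2.mp (by omega)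

/-! ### counting inversions -/

/-- `t` is the reflection of some positive real root sent negative by `w`. -/
def QInv (w t : W) : Prop :=
  ∃ (v : W) (i : Fin (n + 1)), 0 ≤ R.actR v (simpleVec i) ∧
    R.refl (R.actR v (simpleVec i)) = t ∧ R.actR w (R.actR v (simpleVec i)) ≤ 0

lemma card_QInv_eq_zero (w : W) (hw : w = 1) (F : Finset W)
    (hF : ∀ t ∈ F, R.QInv w t) : F = ∅ := by
  rw [Finset.eq_empty_iff_forall_notMem]
  intro t ht
  obtain ⟨v, i, hpos, -, hneg⟩ := hF t ht
  rw [hw, R.actR_one] at hneg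
  have h0 : R.actR v (simpleVec i) = 0 := le_antisymm hneg hpos
  exact simpleVec_ne_zero i (R.actR_injective v
    (show R.actR v (simpleVec i) = R.actR v 0 by rw [h0, R.actR_zero]))

lemma card_le_length (N : ℕ) : ∀ (w : W), R.cs.length w ≤ N →
    ∀ F : Finset W, (∀ t ∈ F, R.QInv w t) → F.card ≤ R.cs.length w := by
  classical
  induction N with
  | zero =>
    intro w hw F hF
    have hw1 : w = 1 := R.cs.length_eq_zero_iff.mp (Nat.le_zero.mp hw)
    rw [R.card_QInv_eq_zero w hw1 F hF]
    simp
  | succ N ih =>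
    intro w hw F hF
    by_cases hw1 : w = 1
    · rw [R.card_QInv_eq_zero w hw1 F hF]
      simp
    · obtain ⟨i, hdesc⟩ := R.cs.exists_rightDescent_of_ne_one hw1
      have hlen' : R.cs.length (w * R.cs.simple i) + 1 = R.cs.length w := by
        rcases R.cs.length_mul_simple w i with h | h
        · exact absurd hdesc (by unfold CoxeterSystem.IsRightDescent; omega)
        · exact h
      have key : ∀ t ∈ F.erase (R.cs.simple i),
          R.QInv (w * R.cs.simple i) (R.cs.simple i * t * R.cs.simple i) := by
        intro t ht
        obtain ⟨htne, htF⟩ := Finset.mem_erase.mp ht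
        obtain ⟨v, j, hpos, hrefl, hneg⟩ := hF t htF
        have htt : t * t = 1 := by rw [← hrefl]; exact R.refl_mul_self v j
        have httinv : t⁻¹ = t := inv_eq_of_mul_eq_one_right htt
        have hactt : R.actR t (R.actR v (simpleVec j)) = -(R.actR v (simpleVec j)) := by
          rw [← hrefl]
          exact R.actR_refl_self v j
        -- positivity of the reflected root
        have hpos' : 0 ≤ R.actR (R.cs.simple i * v) (simpleVec j) := by
          rcases R.neg_or_nonneg (R.cs.simple i * v) j with hneg' | h
          · exfalso
            -- then s i * t * s i would have length 0, forcing t = s i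
            have hεpos : 0 ≤ R.actR (R.cs.simple i * t * v) (simpleVec j) := by
              rw [R.actR_mul, R.actR_mul, hactt, R.actR_neg, ← R.actR_mul]
              exact neg_nonneg.mpr hneg'
            have hax := R.length_refl_lt_iff _ ⟨R.cs.simple i * t * v, j, rfl⟩ hεpos
              (R.cs.simple i)
            have hreflε : R.refl (R.actR (R.cs.simple i * t * v) (simpleVec j))
                = R.cs.simple i * t * R.cs.simple i := by
              rw [R.actR_mul, R.refl_act, hrefl]
              have hgr : R.cs.simple i * t * t * (R.cs.simple i * t)⁻¹
                  = R.cs.simple i * t * (R.cs.simple i)⁻¹ := by group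
              rw [hgr, R.cs.inv_simple]
            have hscond : R.actR (R.cs.simple i) (R.actR (R.cs.simple i * t * v)
                (simpleVec j)) ≤ 0 := by
              rw [← R.actR_mul]
              have hgr : R.cs.simple i * (R.cs.simple i * t * v) =
                  (R.cs.simple i * R.cs.simple i) * (t * v) := by group
              rw [hgr, R.cs.simple_mul_simple_self, one_mul, R.actR_mul, hactt]
              exact neg_nonpos.mpr hpos
            have hlt := hax.mpr hscond
            rw [hreflε, R.cs.length_simple] at hlt
            have h0 : R.cs.length (R.cs.simple i * (R.cs.simple i * t * R.cs.simple i))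
                = 0 := by omega
            have h1 : R.cs.simple i * (R.cs.simple i * t * R.cs.simple i)
                = t * R.cs.simple i := by
              have : R.cs.simple i * (R.cs.simple i * t * R.cs.simple i)
                  = (R.cs.simple i * R.cs.simple i) * (t * R.cs.simple i) := by group
              rw [this, R.cs.simple_mul_simple_self, one_mul]
            rw [h1, R.cs.length_eq_zero_iff] at h0
            exact htne (by rw [← R.cs.inv_simple]; exact eq_inv_of_mul_eq_one_left h0)
          · exact h
        refine ⟨R.cs.simple i * v, j, hpos', ?_, ?_⟩
        · rw [R.actR_mul, R.refl_act, hrefl, R.cs.inv_simple]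
        · rw [← R.actR_mul]
          have hgr : w * R.cs.simple i * (R.cs.simple i * v)
              = w * (R.cs.simple i * R.cs.simple i) * v := by group
          rw [hgr, R.cs.simple_mul_simple_self, mul_one, R.actR_mul]
          exact hneg
      -- cardinality bookkeeping
      have hinj : Function.Injective (fun t => R.cs.simple i * t * R.cs.simple i) := by
        intro x y hxy
        simp only at hxy
        exact mul_left_cancel (mul_right_cancel hxy)
      have himg : ∀ t' ∈ (F.erase (R.cs.simple i)).image
          (fun t => R.cs.simple i * t * R.cs.simple i), R.QInv (w * R.cs.simple i) t' := by
        intro t' ht'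
        obtain ⟨t, ht, rfl⟩ := Finset.mem_image.mp ht'
        exact key t ht
      have h2 := ih (w * R.cs.simple i) (by omega) _ himg
      rw [Finset.card_image_of_injective _ hinj] at h2
      have h3 : F.card ≤ (F.erase (R.cs.simple i)).card + 1 := by
        calc F.card ≤ (insert (R.cs.simple i) (F.erase (R.cs.simple i))).card :=
              Finset.card_le_card (Finset.subset_insert_iff.mpr (le_refl _))
          _ ≤ (F.erase (R.cs.simple i)).card + 1 := Finset.card_insert_le _ _
      omega

/-! ### sign symmetry -/

/-- If `⟨a, b∨⟩ ≥ 1` and `⟨b, a∨⟩ ≤ -1` for positive real roots `a`, `b`, we get a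
contradiction: the element `s_a s_b` would have infinitely many inversions. -/
lemma no_bad_pair (wa wb : W) (ia ib : Fin (n + 1)) (a b : AffLat n)
    (haeq : a = R.actR wa (simpleVec ia)) (hbeq : b = R.actR wb (simpleVec ib))
    (ha0 : 0 ≤ a) (hb0 : 0 ≤ b)
    (hp : 1 ≤ R.pairing a (R.coroot b)) (hq : R.pairing b (R.coroot a) ≤ -1) : False := by
  classical
  set p := R.pairing a (R.coroot b) with hpdef
  set q := R.pairing b (R.coroot a) with hqdef
  have hta : R.actR (R.refl a) a = -a := by
    have := R.actR_refl_self wa ia; rwa [← haeq] at this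
  have htb : R.actR (R.refl a) b = b - q • a := by
    have := R.actR_refl wa ia b; rw [← haeq] at this; rw [this, hqdef]
  have hua : R.actR (R.refl b) a = a - p • b := by
    have := R.actR_refl wb ib a; rw [← hbeq] at this; rw [this, hpdef]
  have hub : R.actR (R.refl b) b = -b := by
    have := R.actR_refl_self wb ib; rwa [← hbeq] at this
  -- the key one-step computation
  have key : ∀ x y : ℤ, R.actR (R.refl a * R.refl b) (x • a + y • b)
      = ((p * q - 1) * x + q * y) • a + (-(p * x) - y) • b := by
    intro x y
    rw [R.actR_mul, R.actR_add, R.actR_zsmul, R.actR_zsmul, hua, hub,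
        R.actR_add, R.actR_zsmul, R.actR_zsmul, R.actR_sub, R.actR_zsmul,
        R.actR_neg, hta, htb]
    module
  -- powers of s_a s_b acting on a
  have hKA : ∀ m : ℕ, R.actR ((R.refl a * R.refl b) ^ m) a
      = ((-1 : ℤ) ^ m * (bfseq p q m).1) • a + ((-1 : ℤ) ^ m * (bfseq p q m).2) • b := by
    intro m
    induction m with
    | zero =>
      rw [pow_zero, R.actR_one]
      simp [bfseq]
    | succ m ih =>
      rw [pow_succ', R.actR_mul, ih, key]
      match_scalars <;> (simp only [bfseq]; ring)
  have hGT : ∀ m : ℕ, R.actR ((R.refl a * R.refl b) ^ m * R.refl a) a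
      = ((-1 : ℤ) ^ (m + 1) * (bfseq p q m).1) • a
        + ((-1 : ℤ) ^ (m + 1) * (bfseq p q m).2) • b := by
    intro m
    rw [R.actR_mul, hta, R.actR_neg, hKA m]
    match_scalars <;> ring
  -- nonnegativity of combinations
  have hcomb : ∀ x y : ℤ, 0 ≤ x → 0 ≤ y → (0 : AffLat n) ≤ x • a + y • b := by
    intro x y hx hy
    rw [Pi.le_def]
    intro k
    have hak := (Pi.le_def.mp ha0) k
    have hbk := (Pi.le_def.mp hb0) k
    simp only [Pi.zero_apply] at hak hbk
    simp only [Pi.zero_apply, Pi.add_apply, Pi.smul_apply, smul_eq_mul]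
    exact add_nonneg (mul_nonneg hx hak) (mul_nonneg hy hbk)
  have hcombneg : ∀ x y : ℤ, 0 ≤ x → 0 ≤ y → (-x) • a + (-y) • b ≤ (0 : AffLat n) := by
    intro x y hx hy
    have h1 : (-x) • a + (-y) • b = -(x • a + y • b) := by module
    rw [h1]
    exact neg_nonpos.mpr (hcomb x y hx hy)
  -- each T_k is an inversion of s_a s_b
  have hQk : ∀ k : ℕ, R.QInv (R.refl a * R.refl b)
      (R.refl (R.actR ((R.refl a * R.refl b) ^ (2 * k + 1) * R.refl a) a)) := by
    intro k
    have hveq : R.actR ((R.refl a * R.refl b) ^ (2 * k + 1) * R.refl a * wa) (simpleVec ia)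
        = R.actR ((R.refl a * R.refl b) ^ (2 * k + 1) * R.refl a) a := by
      rw [R.actR_mul, ← haeq]
    refine ⟨(R.refl a * R.refl b) ^ (2 * k + 1) * R.refl a * wa, ia, ?_, ?_, ?_⟩
    · rw [hveq, hGT]
      have hE : ((-1 : ℤ)) ^ (2 * k + 1 + 1) = 1 := by
        have h21 : 2 * k + 1 + 1 = 2 * (k + 1) := by ring
        rw [h21, pow_mul]; norm_num
      rw [hE, one_mul, one_mul]
      obtain ⟨h1, h2⟩ := bfseq_nonneg hp hq (2 * k + 1)
      exact hcomb _ _ (by linarith) h2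
    · rw [hveq]
    · rw [hveq, ← R.actR_mul]
      have hgr : (R.refl a * R.refl b) * ((R.refl a * R.refl b) ^ (2 * k + 1) * R.refl a)
          = (R.refl a * R.refl b) ^ (2 * (k + 1)) * R.refl a := by
        have h21 : 2 * k + 1 + 1 = 2 * (k + 1) := by ring
        rw [← mul_assoc, ← pow_succ', h21]
      rw [hgr, hGT]
      have hO : ((-1 : ℤ)) ^ (2 * (k + 1) + 1) = -1 := by
        rw [pow_succ, pow_mul]; norm_num
      rw [hO, neg_one_mul, neg_one_mul]
      obtain ⟨h1, h2⟩ := bfseq_nonneg hp hq (2 * (k + 1))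
      exact hcombneg _ _ (by linarith) h2
  -- the T_k are pairwise distinct
  have hbne : b ≠ 0 := by
    intro h0
    exact simpleVec_ne_zero ib (R.actR_injective wb
      (show R.actR wb (simpleVec ib) = R.actR wb 0 by rw [← hbeq, h0, R.actR_zero]))
  have hTinj : ∀ j k : ℕ, j < k →
      R.refl (R.actR ((R.refl a * R.refl b) ^ (2 * j + 1) * R.refl a) a)
        = R.refl (R.actR ((R.refl a * R.refl b) ^ (2 * k + 1) * R.refl a) a) → False := by
    intro j k hjk heq
    have hT : ∀ m : ℕ, R.refl (R.actR ((R.refl a * R.refl b) ^ (2 * m + 1) * R.refl a) a)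
        = (R.refl a * R.refl b) ^ (2 * m + 1) * R.refl a
          * ((R.refl a * R.refl b) ^ (2 * m + 1))⁻¹ := by
      intro m
      rw [R.refl_act]
      group
    rw [hT j, hT k] at heq
    have hsplit : (R.refl a * R.refl b) ^ (2 * k + 1)
        = (R.refl a * R.refl b) ^ (2 * j + 1) * (R.refl a * R.refl b) ^ (2 * (k - j)) := by
      rw [← pow_add]
      congr 1
      omega
    rw [hsplit] at heq
    have hgr : (R.refl a * R.refl b) ^ (2 * j + 1) * (R.refl a * R.refl b) ^ (2 * (k - j))
          * R.refl a
          * ((R.refl a * R.refl b) ^ (2 * j + 1) * (R.refl a * R.refl b) ^ (2 * (k - j)))⁻¹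
        = (R.refl a * R.refl b) ^ (2 * j + 1)
          * ((R.refl a * R.refl b) ^ (2 * (k - j)) * R.refl a
              * ((R.refl a * R.refl b) ^ (2 * (k - j)))⁻¹)
          * ((R.refl a * R.refl b) ^ (2 * j + 1))⁻¹ := by group
    rw [hgr] at heq
    have h2 : R.refl a = (R.refl a * R.refl b) ^ (2 * (k - j)) * R.refl a
        * ((R.refl a * R.refl b) ^ (2 * (k - j)))⁻¹ :=
      mul_left_cancel (mul_right_cancel heq)
    have hcomm : (R.refl a * R.refl b) ^ (2 * (k - j)) * R.refl a
        = R.refl a * (R.refl a * R.refl b) ^ (2 * (k - j)) := by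
      calc (R.refl a * R.refl b) ^ (2 * (k - j)) * R.refl a
          = ((R.refl a * R.refl b) ^ (2 * (k - j)) * R.refl a
            * ((R.refl a * R.refl b) ^ (2 * (k - j)))⁻¹)
            * (R.refl a * R.refl b) ^ (2 * (k - j)) := by group
        _ = R.refl a * (R.refl a * R.refl b) ^ (2 * (k - j)) := by rw [← h2]
    have hact := congrArg (fun z => R.actR z a) hcomm
    rw [hGT (2 * (k - j)), R.actR_mul, hKA (2 * (k - j)), R.actR_add, R.actR_zsmul,
      R.actR_zsmul, hta, htb] at hact
    have hE2 : ((-1 : ℤ)) ^ (2 * (k - j)) = 1 := by rw [pow_mul]; norm_num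
    have hO2 : ((-1 : ℤ)) ^ (2 * (k - j) + 1) = -1 := by rw [pow_succ, hE2]; norm_num
    rw [hE2, hO2] at hact
    have hd1 : 1 ≤ (bfseq p q (2 * (k - j))).2 := bfseq_snd_pos hp hq _ (by omega)
    obtain ⟨hc1, -⟩ := bfseq_nonneg hp hq (2 * (k - j))
    apply hbne
    funext k0
    have h7 := congrFun hact k0
    have hak := (Pi.le_def.mp ha0) k0
    have hbk := (Pi.le_def.mp hb0) k0
    simp only [Pi.zero_apply] at hak hbk
    simp only [Pi.add_apply, Pi.smul_apply, Pi.sub_apply, Pi.neg_apply, smul_eq_mul,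
      neg_one_mul, one_mul, neg_mul] at h7
    simp only [Pi.zero_apply]
    nlinarith [h7, hd1, hq, hak, hbk,
      mul_nonneg (le_trans zero_le_one hd1) hbk,
      mul_nonneg (mul_nonneg (le_trans zero_le_one hd1) (by linarith : (0:ℤ) ≤ -q)) hak]
  -- pigeonhole
  set L := R.cs.length (R.refl a * R.refl b) with hL
  have hQ : ∀ s' ∈ (Finset.range (L + 1)).image
      (fun k => R.refl (R.actR ((R.refl a * R.refl b) ^ (2 * k + 1) * R.refl a) a)),
      R.QInv (R.refl a * R.refl b) s' := by
    intro s' hs'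
    obtain ⟨k, -, rfl⟩ := Finset.mem_image.mp hs'
    exact hQk k
  have hcard := R.card_le_length L (R.refl a * R.refl b) le_rfl _ hQ
  have hcard2 : ((Finset.range (L + 1)).image
      (fun k => R.refl (R.actR ((R.refl a * R.refl b) ^ (2 * k + 1) * R.refl a) a))).card
      = L + 1 := by
    rw [Finset.card_image_of_injOn, Finset.card_range]
    intro x _ y _ hxy
    by_contra hne
    rcases lt_or_gt_of_ne hne with h | h
    · exact hTinj x y h hxy
    · exact hTinj y x h hxy.symm
  omega

/-- sign symmetry for pairings of positive real roots -/
lemma pairing_pos_symm (wa wb : W) (ia ib : Fin (n + 1)) (a b : AffLat n)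
    (haeq : a = R.actR wa (simpleVec ia)) (hbeq : b = R.actR wb (simpleVec ib))
    (ha0 : 0 ≤ a) (hb0 : 0 ≤ b)
    (hp : 1 ≤ R.pairing a (R.coroot b)) : 1 ≤ R.pairing b (R.coroot a) := by
  by_contra hq1
  push_neg at hq1
  have hbne : b ≠ 0 := by
    intro h0
    exact simpleVec_ne_zero ib (R.actR_injective wb
      (show R.actR wb (simpleVec ib) = R.actR wb 0 by rw [← hbeq, h0, R.actR_zero]))
  rcases lt_or_ge (R.pairing b (R.coroot a)) 0 with hneg | hpos
  · exact R.no_bad_pair wa wb ia ib a b haeq hbeq ha0 hb0 hp (by omega)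
  · -- then the pairing is 0, so s_a and s_b commute, forcing b = 0
    have hq0 : R.pairing b (R.coroot a) = 0 := by omega
    have hta : R.actR (R.refl a) a = -a := by
      have := R.actR_refl_self wa ia; rwa [← haeq] at this
    have htb : R.actR (R.refl a) b = b := by
      have h3 := R.actR_refl wa ia b
      rw [← haeq] at h3
      rw [h3, hq0, zero_smul, sub_zero]
    have hua : R.actR (R.refl b) a = a - R.pairing a (R.coroot b) • b := by
      have h3 := R.actR_refl wb ib a
      rwa [← hbeq] at h3
    -- commutation
    have h1 := R.refl_act (R.refl a) b
    rw [htb] at h1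
    have hcomm : R.refl b * R.refl a = R.refl a * R.refl b := by
      nth_rewrite 1 [h1]
      group
    have hact := congrArg (fun z => R.actR z a) hcomm
    rw [R.actR_mul, R.actR_mul, hta, hua, R.actR_neg, hua, R.actR_sub, R.actR_zsmul,
      hta, htb] at hact
    -- hact : -(a - p • b) = -a - p • b, so 2 p • b = 0
    apply hbne
    funext k0
    have h7 := congrFun hact k0
    simp only [Pi.add_apply, Pi.smul_apply, Pi.sub_apply, Pi.neg_apply, smul_eq_mul,
      Pi.zero_apply] at h7 ⊢
    nlinarith [h7, hp]

end AffineRootSystem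
/-- If `α, β` are positive real affine roots with
`ℓ(s_α s_β) = ℓ(s_α) + ℓ(s_β)`, then `⟨α, β∨⟩ ≤ 0`. -/
theorem pairing_nonpos_of_length_add {n : ℕ} {W : Type*} [Group W]
    (R : AffineRootSystem n W) (a b : AffLat n)
    (ha : R.IsPosRoot a) (hb : R.IsPosRoot b)
    (hlen : R.cs.length (R.refl a * R.refl b)
        = R.cs.length (R.refl a) + R.cs.length (R.refl b)) :
    R.pairing a (R.coroot b) ≤ 0 := by
  obtain ⟨⟨wa, ia, haeq⟩, ha0⟩ := ha
  obtain ⟨⟨wb, ib, hbeq⟩, hb0⟩ := hb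
  by_contra hcon
  push_neg at hcon
  have hp : 1 ≤ R.pairing a (R.coroot b) := hcon
  have hq : 1 ≤ R.pairing b (R.coroot a) :=
    R.pairing_pos_symm wa wb ia ib a b haeq hbeq ha0 hb0 hp
  -- basic reflection facts
  have hta : R.actR (R.refl a) a = -a := by
    have := R.actR_refl_self wa ia; rwa [← haeq] at this
  have hub : R.actR (R.refl b) b = -b := by
    have := R.actR_refl_self wb ib; rwa [← hbeq] at this
  have hane : a ≠ 0 := by
    intro h0
    exact AffineRootSystem.simpleVec_ne_zero ia (R.actR_injective wa
      (show R.actR wa (simpleVec ia) = R.actR wa 0 by rw [← haeq, h0, R.actR_zero]))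
  have hbne : b ≠ 0 := by
    intro h0
    exact AffineRootSystem.simpleVec_ne_zero ib (R.actR_injective wb
      (show R.actR wb (simpleVec ib) = R.actR wb 0 by rw [← hbeq, h0, R.actR_zero]))
  have htne : R.refl a ≠ 1 := by
    intro h1
    rw [h1, R.actR_one] at hta
    apply hane
    funext k0
    have := congrFun hta k0
    simp only [Pi.neg_apply, Pi.zero_apply] at this ⊢
    omega
  have hune : R.refl b ≠ 1 := by
    intro h1
    rw [h1, R.actR_one] at hub
    apply hbne
    funext k0
    have := congrFun hub k0
    simp only [Pi.neg_apply, Pi.zero_apply] at this ⊢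
    omega
  have hlta : 1 ≤ R.cs.length (R.refl a) := by
    have h2 : R.cs.length (R.refl a) ≠ 0 := fun h => htne (R.cs.length_eq_zero_iff.mp h)
    omega
  have hltb : 1 ≤ R.cs.length (R.refl b) := by
    have h2 : R.cs.length (R.refl b) ≠ 0 := fun h => hune (R.cs.length_eq_zero_iff.mp h)
    omega
  -- length of the reversed product
  have htt : R.refl a * R.refl a = 1 := by
    have := R.refl_mul_self wa ia; rwa [← haeq] at this
  have huu : R.refl b * R.refl b = 1 := by
    have := R.refl_mul_self wb ib; rwa [← hbeq] at this
  have hinvt : (R.refl a)⁻¹ = R.refl a := inv_eq_of_mul_eq_one_right htt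
  have hinvu : (R.refl b)⁻¹ = R.refl b := inv_eq_of_mul_eq_one_right huu
  have hlen2 : R.cs.length (R.refl b * R.refl a)
      = R.cs.length (R.refl a) + R.cs.length (R.refl b) := by
    have h3 : R.refl b * R.refl a = (R.refl a * R.refl b)⁻¹ := by
      rw [mul_inv_rev, hinvt, hinvu]
    rw [h3, R.cs.length_inv, hlen]
  -- positivity of s_b(a) and s_a(b)
  have hua : R.actR (R.refl b) a = a - R.pairing a (R.coroot b) • b := by
    have := R.actR_refl wb ib a; rwa [← hbeq] at this
  have htb : R.actR (R.refl a) b = b - R.pairing b (R.coroot a) • a := by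
    have := R.actR_refl wa ia b; rwa [← haeq] at this
  have hposba : 0 ≤ R.actR (R.refl b) a := by
    have hiff := R.length_refl_lt_iff a ⟨wa, ia, haeq⟩ ha0 (R.refl b)
    have hnlt : ¬ R.cs.length (R.refl b * R.refl a) < R.cs.length (R.refl b) := by
      rw [hlen2]; omega
    have hn : ¬ R.actR (R.refl b) a ≤ 0 := fun hc => hnlt (hiff.mpr hc)
    have hdich := R.neg_or_nonneg (R.refl b * wa) ia
    rw [R.actR_mul, ← haeq] at hdich
    exact hdich.resolve_left hn
  have hposab : 0 ≤ R.actR (R.refl a) b := by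
    have hiff := R.length_refl_lt_iff b ⟨wb, ib, hbeq⟩ hb0 (R.refl a)
    have hnlt : ¬ R.cs.length (R.refl a * R.refl b) < R.cs.length (R.refl a) := by
      rw [hlen]; omega
    have hn : ¬ R.actR (R.refl a) b ≤ 0 := fun hc => hnlt (hiff.mpr hc)
    have hdich := R.neg_or_nonneg (R.refl a * wb) ib
    rw [R.actR_mul, ← hbeq] at hdich
    exact hdich.resolve_left hn
  rw [hua] at hposba
  rw [htb] at hposab
  -- coordinatewise analysis
  have hax : ∀ k0, R.pairing a (R.coroot b) * b k0 ≤ a k0 := by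
    intro k0
    have := (Pi.le_def.mp hposba) k0
    simp only [Pi.zero_apply, Pi.sub_apply, Pi.smul_apply, smul_eq_mul] at this
    omega
  have hbx : ∀ k0, R.pairing b (R.coroot a) * a k0 ≤ b k0 := by
    intro k0
    have := (Pi.le_def.mp hposab) k0
    simp only [Pi.zero_apply, Pi.sub_apply, Pi.smul_apply, smul_eq_mul] at this
    omega
  obtain ⟨k0, hk0⟩ : ∃ k0, a k0 ≠ 0 := by
    by_contra h
    push_neg at h
    exact hane (funext h)
  have hak0 : 1 ≤ a k0 := by
    have := (Pi.le_def.mp ha0) k0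
    simp only [Pi.zero_apply] at this
    omega
  have hbk0 : 0 ≤ b k0 := by
    have := (Pi.le_def.mp hb0) k0
    simpa using this
  -- p * q = 1, hence p = q = 1
  have hpq : R.pairing a (R.coroot b) * R.pairing b (R.coroot a) = 1 := by
    have h1 := hax k0
    have h2 := hbx k0
    nlinarith [mul_le_mul_of_nonneg_left h2 (by omega : (0:ℤ) ≤ R.pairing a (R.coroot b))]
  have hp1 : R.pairing a (R.coroot b) = 1 := by nlinarith
  have hq1 : R.pairing b (R.coroot a) = 1 := by nlinarith
  -- hence a = b
  have hab : a = b := by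
    funext k1
    have h1 := hax k1
    have h2 := hbx k1
    rw [hp1] at h1
    rw [hq1] at h2
    omega
  -- but then the pairing is 2, not 1
  have h2 : R.pairing b (R.coroot b) = 2 := by
    have := R.pairing_coroot_self wb ib; rwa [← hbeq] at this
  rw [hab, h2] at hp1
  omega
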